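/- If (G,f) is a P-filtered graph and e is a deletable edge, then the morphism of persistent sets π₀(G∖e, f) → π₀(G,f) induced by the inclusion of graphs is an isomorphism (bijective at every grade r ∈ P). -/

import Mathlib

structure Grph where
  V : Type
  E : Type
  [fintV : Fintype V]
  [fintE : Fintype E]
  [decV : DecidableEq V]
  [decE : DecidableEq E]
  bnd : E → V × V

attribute [instance] Grph.fintV Grph.fintE Grph.decV Grph.decE

/-- boundary map k⟨E⟩ → k⟨V⟩, e ↦ e₁ - e₀ -/
noncomputable def Grph.d (G : Grph) (k : Type) [Field k] :
    (G.E →₀ k) →ₗ[k] (G.V →₀ k) :=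
  Finsupp.linearCombination k fun e =>
    Finsupp.single (G.bnd e).2 1 - Finsupp.single (G.bnd e).1 1

def Grph.adj (G : Grph) (v w : G.V) : Prop :=
  ∃ e, G.bnd e = (v, w) ∨ G.bnd e = (w, v)

structure FGrph (P : Type) [PartialOrder P] extends Grph where
  fV : V → P
  fE : E → P
  mono0 : ∀ e, fV (bnd e).1 ≤ fE e
  mono1 : ∀ e, fV (bnd e).2 ≤ fE e

variable {P : Type} [PartialOrder P]

/-- boundary map of the sublevel graph at grade r -/
noncomputable def FGrph.dr (G : FGrph P) (k : Type) [Field k] (r : P) :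
    ({e : G.E // G.fE e ≤ r} →₀ k) →ₗ[k] ({v : G.V // G.fV v ≤ r} →₀ k) :=
  Finsupp.linearCombination k fun e =>
    Finsupp.single ⟨(G.bnd e.1).2, le_trans (G.mono1 e.1) e.2⟩ 1 -
    Finsupp.single ⟨(G.bnd e.1).1, le_trans (G.mono0 e.1) e.2⟩ 1

noncomputable def FGrph.vmap (G : FGrph P) (k : Type) [Field k] {r s : P} (h : r ≤ s) :
    ({v : G.V // G.fV v ≤ r} →₀ k) →ₗ[k] ({v : G.V // G.fV v ≤ s} →₀ k) :=
  Finsupp.lmapDomain k k fun v => ⟨v.1, le_trans v.2 h⟩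

noncomputable def FGrph.emap (G : FGrph P) (k : Type) [Field k] {r s : P} (h : r ≤ s) :
    ({e : G.E // G.fE e ≤ r} →₀ k) →ₗ[k] ({e : G.E // G.fE e ≤ s} →₀ k) :=
  Finsupp.lmapDomain k k fun e => ⟨e.1, le_trans e.2 h⟩

lemma FGrph.dNat (G : FGrph P) (k : Type) [Field k] {r s : P} (h : r ≤ s) :
    (G.dr k s).comp (G.emap k h) = (G.vmap k h).comp (G.dr k r) := by
  apply Finsupp.lhom_ext
  intro e a
  show (G.dr k s) ((G.emap k h) (Finsupp.single e a)) =
    (G.vmap k h) ((G.dr k r) (Finsupp.single e a))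
  rw [FGrph.emap, Finsupp.lmapDomain_apply, Finsupp.mapDomain_single, FGrph.dr,
    Finsupp.linearCombination_single, FGrph.dr, Finsupp.linearCombination_single,
    map_smul, map_sub, FGrph.vmap, Finsupp.lmapDomain_apply, Finsupp.lmapDomain_apply,
    Finsupp.mapDomain_single, Finsupp.mapDomain_single]

/-- 0-dim homology of the sublevel graph at r -/
noncomputable abbrev FGrph.H0at (G : FGrph P) (k : Type) [Field k] (r : P) :=
  ({v : G.V // G.fV v ≤ r} →₀ k) ⧸ LinearMap.range (G.dr k r)

noncomputable def FGrph.H0map (G : FGrph P) (k : Type) [Field k] {r s : P} (h : r ≤ s) :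
    G.H0at k r →ₗ[k] G.H0at k s :=
  Submodule.mapQ _ _ (G.vmap k h) (by
    rintro x ⟨y, rfl⟩
    exact ⟨G.emap k h y, by
      have := LinearMap.congr_fun (G.dNat k h) y
      simpa using this⟩)

noncomputable abbrev FGrph.H1at (G : FGrph P) (k : Type) [Field k] (r : P) :=
  LinearMap.ker (G.dr k r)

noncomputable def FGrph.H1map (G : FGrph P) (k : Type) [Field k] {r s : P} (h : r ≤ s) :
    G.H1at k r →ₗ[k] G.H1at k s :=
  (G.emap k h).restrict (p := LinearMap.ker (G.dr k r)) (q := LinearMap.ker (G.dr k s))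
    (by
      intro x hx
      have := LinearMap.congr_fun (G.dNat k h) x
      simp only [LinearMap.mem_ker] at hx ⊢
      simp only [LinearMap.coe_comp, Function.comp_apply] at this
      rw [this, hx, map_zero])

def FGrph.adjAt (G : FGrph P) (r : P) (a b : G.V) : Prop :=
  ∃ e, G.fE e ≤ r ∧ (G.bnd e = (a, b) ∨ G.bnd e = (b, a))

def FGrph.connAt (G : FGrph P) (r : P) : G.V → G.V → Prop :=
  Relation.ReflTransGen (G.adjAt r)

def FGrph.pi0At (G : FGrph P) (r : P) :=
  Quot (fun a b : {v : G.V // G.fV v ≤ r} => G.adjAt r a.1 b.1)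

def FGrph.Collapsible (G : FGrph P) (e : G.E) : Prop :=
  (G.bnd e).1 ≠ (G.bnd e).2 ∧
    (G.fE e = G.fV (G.bnd e).1 ∨ G.fE e = G.fV (G.bnd e).2)

def FGrph.delete (G : FGrph P) (e : G.E) : FGrph P where
  V := G.V
  E := {d : G.E // d ≠ e}
  bnd d := G.bnd d.1
  fV := G.fV
  fE d := G.fE d.1
  mono0 d := G.mono0 d.1
  mono1 d := G.mono1 d.1

def FGrph.Deletable (G : FGrph P) (e : G.E) : Prop :=
  (G.delete e).connAt (G.fE e) (G.bnd e).1 (G.bnd e).2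

def FGrph.collapse (G : FGrph P) (e : G.E) (x y : G.V) (hxy : y ≠ x)
    (hf : G.fV y ≤ G.fV x) : FGrph P where
  V := {v : G.V // v ≠ x}
  E := {d : G.E // d ≠ e}
  bnd d :=
    (if h : (G.bnd d.1).1 = x then ⟨y, hxy⟩ else ⟨(G.bnd d.1).1, h⟩,
     if h : (G.bnd d.1).2 = x then ⟨y, hxy⟩ else ⟨(G.bnd d.1).2, h⟩)
  fV v := G.fV v.1
  fE d := G.fE d.1
  mono0 d := by
    dsimp only
    split
    · exact le_trans hf (by rw [← ‹(G.bnd d.1).1 = x›]; exact G.mono0 d.1)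
    · exact G.mono0 d.1
  mono1 d := by
    dsimp only
    split
    · exact le_trans hf (by rw [← ‹(G.bnd d.1).2 = x›]; exact G.mono1 d.1)
    · exact G.mono1 d.1

/-! At grade `r` both persistent sets are quotients of the same vertex set, and the relation of
`G∖e` already generates that of `G`: the only extra edge of `G` is `e`, whose endpoints are
connected in `G∖e` at grade `f(e) ≤ r`. So the identity of vertices descends to an inverse. -/

theorem Quot.map_id_bijective {α : Type*} {r s : α → α → Prop} (hrs : ∀ a b, r a b → s a b)
    (hsr : ∀ a b, s a b → Quot.mk r a = Quot.mk r b) :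
    Function.Bijective (Quot.map id hrs) :=
  Function.bijective_iff_has_inverse.mpr
    ⟨Quot.lift (Quot.mk r) hsr, Quot.ind fun _ => rfl, Quot.ind fun _ => rfl⟩

namespace FGrph

variable (G : FGrph P)

lemma adjAt_symm {r : P} {a b : G.V} (h : G.adjAt r a b) : G.adjAt r b a :=
  let ⟨d, hdr, hab⟩ := h
  ⟨d, hdr, hab.symm⟩

instance (r : P) : Std.Symm (G.adjAt r) := ⟨fun _ _ => G.adjAt_symm⟩

lemma connAt_symm {r : P} {a b : G.V} (h : G.connAt r a b) : G.connAt r b a :=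
  Std.Symm.symm (r := Relation.ReflTransGen (G.adjAt r)) a b h

lemma connAt_mono {r s : P} (hrs : r ≤ s) {a b : G.V} (h : G.connAt r a b) :
    G.connAt s a b :=
  Relation.ReflTransGen.mono (fun _ _ ⟨d, hdr, hab⟩ => ⟨d, hdr.trans hrs, hab⟩) _ _ h

lemma fV_le_of_adjAt {r : P} {a b : G.V} (h : G.adjAt r a b) : G.fV b ≤ r := by
  obtain ⟨d, hdr, hab | hab⟩ := h
  · exact (congrArg Prod.snd hab ▸ G.mono1 d).trans hdr
  · exact (congrArg Prod.fst hab ▸ G.mono0 d).trans hdr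

lemma pi0At_mk_eq_of_connAt {r : P} {a b : G.V} (h : G.connAt r a b) (ha : G.fV a ≤ r)
    (hb : G.fV b ≤ r) : (Quot.mk _ ⟨a, ha⟩ : G.pi0At r) = Quot.mk _ ⟨b, hb⟩ := by
  induction h with
  | refl => rfl
  | @tail c b _ hcb ih =>
    exact (ih (G.fV_le_of_adjAt (G.adjAt_symm hcb))).trans (Quot.sound hcb)

variable {G}

lemma Deletable.connAt_delete_of_adjAt {e : G.E} (he : G.Deletable e) {r : P} {a b : G.V}
    (h : G.adjAt r a b) : (G.delete e).connAt r a b := by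
  obtain ⟨d, hdr, hab⟩ := h
  by_cases hde : d = e
  · subst hde
    have hconn := (G.delete d).connAt_mono hdr he
    rcases hab with hab | hab <;> rw [hab] at hconn
    · exact hconn
    · exact (G.delete d).connAt_symm hconn
  · exact Relation.ReflTransGen.single ⟨⟨d, hde⟩, hdr, hab⟩

end FGrph

/-- if `e` is a deletable edge of `(G,f)`, then the morphism of persistent
sets `π₀(G∖e, f) → π₀(G,f)` induced by the inclusion of graphs is an isomorphism, i.e.
it is bijective at every grade `r ∈ P`. -/
theorem pi0_delete_bijective (G : FGrph P) (e : G.E) (he : G.Deletable e) :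
    ∀ r : P, Function.Bijective
      ((Quot.map (fun v : {v : G.V // G.fV v ≤ r} => v)
        (fun a b hab => by
          obtain ⟨d, hd1, hd2⟩ := hab
          exact ⟨d.1, hd1, hd2⟩)) :
        (G.delete e).pi0At r → G.pi0At r) := fun _ =>
  Quot.map_id_bijective _ fun _ _ hab =>
    (G.delete e).pi0At_mk_eq_of_connAt (he.connAt_delete_of_adjAt hab) _ _
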